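/- arXiv:2406.16668 — 6 statements merged into one kernel-verified Lean document; each statement's English description precedes it below -/
import Mathlib

section
/- For the path P_n with n ≥ 2 vertices, the 1-nearly vertex independence number equals ⌊(n+2)/2⌋. -/
/-- The 1-nearly vertex independence number: the maximum cardinality of a set of
vertices whose induced subgraph has exactly one edge (0 if none exists). -/
noncomputable def alpha1 {V : Type*} (G : SimpleGraph V) : ℕ :=
  sSup {k : ℕ | ∃ s : Set V, s.ncard = k ∧ {e ∈ G.edgeSet | ∀ v ∈ e, v ∈ s}.ncard = 1}

/-!
Identify a vertex set of `P_n` with a set `A ⊆ {0, …, n - 1}` of naturals; its induced edges are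
the pairs `a, a + 1` with both ends in `A`. The sets `A` and `A + 1` lie in `{0, …, n}` and meet
exactly in the right ends of these edges, so `2 |A| ≤ n + 1 + #edges`; with one edge this is
`|A| ≤ (n + 2) / 2`. The bound is attained by `0` together with the odd vertices.
-/

open Set SimpleGraph

theorem Set.two_mul_ncard_le_add_ncard_consecutive {A : Set ℕ} {n : ℕ} (hA : A ⊆ Iio n) :
    2 * A.ncard ≤ n + 1 + {a ∈ A | a + 1 ∈ A}.ncard := by
  have hAfin : A.Finite := (finite_Iio n).subset hA
  set B := (· + 1) '' A
  have hB : B.ncard = A.ncard := ncard_image_of_injective _ (add_left_injective 1)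
  have hinter : (A ∩ B).ncard = {a ∈ A | a + 1 ∈ A}.ncard := by
    have : A ∩ B = (· + 1) '' {a ∈ A | a + 1 ∈ A} := by
      ext x
      simp only [B, mem_inter_iff, mem_image, mem_ofPred_eq]
      constructor
      · rintro ⟨hx, a, ha, rfl⟩
        exact ⟨a, ⟨ha, hx⟩, rfl⟩
      · rintro ⟨a, ⟨ha, ha'⟩, rfl⟩
        exact ⟨ha', a, ha, rfl⟩
    rw [this, ncard_image_of_injective _ (add_left_injective 1)]
  have hunion : (A ∪ B).ncard ≤ n + 1 := by
    refine (ncard_le_ncard ?_ (finite_Iio (n + 1))).trans (ncard_Iio_nat _).le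
    rintro _ (hx | ⟨x, hx, rfl⟩)
    · exact (hA hx).trans (Nat.lt_succ_self n)
    · exact Nat.succ_lt_succ (hA hx)
  have := ncard_union_add_ncard_inter A B hAfin (hAfin.image _)
  omega

theorem exists_subset_Iio_ncard_eq_and_ncard_consecutive_eq_one {n : ℕ} (hn : 2 ≤ n) :
    ∃ A ⊆ Iio n, A.ncard = (n + 2) / 2 ∧ {a ∈ A | a + 1 ∈ A}.ncard = 1 := by
  set odds := (2 * · + 1) '' Iio (n / 2)
  refine ⟨insert 0 odds, ?_, ?_, ?_⟩
  · rintro _ (rfl | ⟨i, hi, rfl⟩)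
    · simp only [mem_Iio]; omega
    · simp only [mem_Iio] at hi ⊢; omega
  · have h0 : 0 ∉ odds := fun ⟨i, _, hi⟩ => Nat.succ_ne_zero _ hi
    have hodds : odds.ncard = n / 2 := by
      rw [ncard_image_of_injective _ (fun i j h => by simpa using h), ncard_Iio_nat]
    rw [ncard_insert_of_notMem h0 ((finite_Iio _).image _), hodds]
    omega
  · suffices {a ∈ insert 0 odds | a + 1 ∈ insert 0 odds} = {0} by rw [this, ncard_singleton]
    ext a
    simp only [odds, mem_ofPred_eq, mem_insert_iff, mem_image, mem_Iio, mem_singleton_iff]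
    constructor
    · rintro ⟨h | ⟨i, -, rfl⟩, h' | ⟨j, -, h'⟩⟩ <;> omega
    · rintro rfl
      exact ⟨Or.inl rfl, Or.inr ⟨0, by omega, rfl⟩⟩

theorem SimpleGraph.ncard_pathGraph_edges_within {n : ℕ} (s : Set (Fin n)) :
    {e ∈ (pathGraph n).edgeSet | ∀ v ∈ e, v ∈ s}.ncard =
      {a ∈ Fin.val '' s | a + 1 ∈ Fin.val '' s}.ncard := by
  have hstep : (fun a : ℕ => s(a, a + 1)).Injective := fun a b h => by
    rcases Sym2.eq_iff.mp h with ⟨h, -⟩ | ⟨h, h'⟩ <;> omega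
  rw [← ncard_image_of_injective _ (Sym2.map.injective Fin.val_injective),
    ← ncard_image_of_injective _ hstep]
  congr 1
  ext e
  simp only [mem_image, mem_ofPred_eq]
  constructor
  · rintro ⟨e, ⟨hadj, hs⟩, rfl⟩
    induction e using Sym2.ind with
    | _ u v =>
      have hu := hs u (Sym2.mem_mk_left u v)
      have hv := hs v (Sym2.mem_mk_right u v)
      rcases pathGraph_adj.mp hadj with h | h
      · exact ⟨u, ⟨⟨u, hu, rfl⟩, v, hv, h.symm⟩, by simp [h]⟩
      · exact ⟨v, ⟨⟨v, hv, rfl⟩, u, hu, h.symm⟩, by simp [h, Sym2.eq_swap]⟩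
  · rintro ⟨_, ⟨⟨u, hu, rfl⟩, v, hv, huv⟩, rfl⟩
    refine ⟨s(u, v), ⟨pathGraph_adj.mpr (Or.inl huv.symm), ?_⟩, by simp [huv]⟩
    rintro w hw
    rcases Sym2.mem_iff.mp hw with rfl | rfl <;> assumption

theorem alpha1_pathGraph_eq_sSup {n : ℕ} : alpha1 (pathGraph n) =
    sSup {k | ∃ A ⊆ Iio n, A.ncard = k ∧ {a ∈ A | a + 1 ∈ A}.ncard = 1} := by
  unfold alpha1
  congr 1
  ext k
  simp only [mem_ofPred_eq, ncard_pathGraph_edges_within]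
  constructor
  · rintro ⟨s, rfl, hs⟩
    exact ⟨Fin.val '' s, Fin.range_val ▸ image_subset_range _ _,
      ncard_image_of_injective _ Fin.val_injective, hs⟩
  · rintro ⟨A, hA, rfl, hA1⟩
    have himage : Fin.val '' (Fin.val ⁻¹' A) = A :=
      image_preimage_eq_of_subset (Fin.range_val ▸ hA)
    refine ⟨Fin.val ⁻¹' A, ?_, by rwa [himage]⟩
    rw [← ncard_image_of_injective _ Fin.val_injective, himage]

theorem alpha1_pathGraph (n : ℕ) (hn : 2 ≤ n) :
    alpha1 (SimpleGraph.pathGraph n) = (n + 2) / 2 := by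
  rw [alpha1_pathGraph_eq_sSup]
  obtain ⟨A, hA, hcard, hA1⟩ := exists_subset_Iio_ncard_eq_and_ncard_consecutive_eq_one hn
  refine IsGreatest.csSup_eq ⟨⟨A, hA, hcard, hA1⟩, ?_⟩
  rintro _ ⟨B, hB, rfl, hB1⟩
  have := two_mul_ncard_le_add_ncard_consecutive hB
  omega
end

section
/- For the cycle C_n with n ≥ 3 vertices, the 1-nearly vertex independence number equals ⌊(n+1)/2⌋. -/
open Function Set

theorem alpha1_eq {V : Type*} {G : SimpleGraph V} {k : ℕ}
    (hk : ∃ s : Set V, s.ncard = k ∧ {e ∈ G.edgeSet | ∀ v ∈ e, v ∈ s}.ncard = 1)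
    (hle : ∀ s : Set V, {e ∈ G.edgeSet | ∀ v ∈ e, v ∈ s}.ncard = 1 → s.ncard ≤ k) :
    alpha1 G = k :=
  IsGreatest.csSup_eq ⟨hk, by rintro _ ⟨s, rfl, hs⟩; exact hle s hs⟩

theorem two_mul_ncard_le_card_add_ncard_inter_preimage {α : Type*} [Finite α] {f : α → α}
    (hf : Injective f) (s : Set α) :
    2 * s.ncard ≤ Nat.card α + (s ∩ f ⁻¹' s).ncard := by
  have hinter : (s ∩ f ⁻¹' s).ncard = (f '' s ∩ s).ncard := by
    rw [← image_inter_preimage, ncard_image_of_injective _ hf]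
  have hunion := ncard_union_add_ncard_inter s (f '' s)
  have hcard := ncard_le_card (s ∪ f '' s)
  rw [ncard_image_of_injective _ hf, inter_comm] at hunion
  omega

namespace SimpleGraph

variable {G : Type*} [AddGroup G] {d : G}

theorem injective_sym2_mk_add_left (hd : d + d ≠ 0) : Injective fun i : G => s(i, d + i) := by
  intro i j h
  rcases Sym2.eq_iff.mp h with ⟨hij, -⟩ | ⟨hij, hji⟩
  · exact hij
  · refine absurd ?_ hd
    rw [← add_right_cancel_iff (a := j), add_assoc, ← hij, hji, zero_add]

theorem circulantGraph_singleton_inducedEdges_eq (hd : d + d ≠ 0) (s : Set G) :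
    {e ∈ (circulantGraph {d}).edgeSet | ∀ v ∈ e, v ∈ s} =
      (fun i => s(i, d + i)) '' (s ∩ (d + ·) ⁻¹' s) := by
  ext e
  induction e with | _ u v =>
  simp only [mem_sep_iff, mem_edgeSet, circulantGraph_adj, mem_singleton_iff, Sym2.mem_iff,
    forall_eq_or_imp, forall_eq, mem_image, mem_inter_iff, mem_preimage, Sym2.eq_iff,
    sub_eq_iff_eq_add]
  constructor
  · rintro ⟨⟨-, rfl | rfl⟩, hu, hv⟩
    · exact ⟨v, ⟨hv, hu⟩, Or.inr ⟨rfl, rfl⟩⟩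
    · exact ⟨u, ⟨hu, hv⟩, Or.inl ⟨rfl, rfl⟩⟩
  · have hd0 : d ≠ 0 := by rintro rfl; simp at hd
    rintro ⟨i, ⟨hi, hdi⟩, ⟨rfl, rfl⟩ | ⟨rfl, rfl⟩⟩ <;> simp [hd0, hi, hdi]

theorem ncard_circulantGraph_singleton_inducedEdges (hd : d + d ≠ 0) (s : Set G) :
    {e ∈ (circulantGraph {d}).edgeSet | ∀ v ∈ e, v ∈ s}.ncard = (s ∩ (d + ·) ⁻¹' s).ncard := by
  rw [circulantGraph_singleton_inducedEdges_eq hd,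
    ncard_image_of_injective _ (injective_sym2_mk_add_left hd)]

theorem ncard_le_of_ncard_circulantGraph_singleton_inducedEdges_eq_one [Finite G]
    (hd : d + d ≠ 0) {s : Set G}
    (hs : {e ∈ (circulantGraph {d}).edgeSet | ∀ v ∈ e, v ∈ s}.ncard = 1) :
    s.ncard ≤ (Nat.card G + 1) / 2 := by
  rw [ncard_circulantGraph_singleton_inducedEdges hd] at hs
  have := two_mul_ncard_le_card_add_ncard_inter_preimage (add_right_injective d) s
  omega

end SimpleGraph

namespace Fin

/-- `2 * j - 1` truncates to `0` at `j = 0`, so this is `{0, 1, 3, 5, …}`. -/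
def oneNearlyIndependent (n : ℕ) : Set (Fin n) :=
  range fun j : Fin ((n + 1) / 2) => ⟨2 * j - 1, by omega⟩

theorem ncard_oneNearlyIndependent (n : ℕ) : (oneNearlyIndependent n).ncard = (n + 1) / 2 := by
  rw [oneNearlyIndependent, ncard_range_of_injective, Nat.card_eq_fintype_card, Fintype.card_fin]
  intro a b h
  simp only [Fin.mk.injEq] at h
  omega

variable {n : ℕ} [NeZero n]

theorem val_one_of_one_lt (hn : 1 < n) : ((1 : Fin n) : ℕ) = 1 := by
  rw [Fin.val_one', Nat.mod_eq_of_lt hn]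

theorem one_add_one_ne_zero (hn : 3 ≤ n) : (1 : Fin n) + 1 ≠ 0 := by
  intro h
  have := congrArg Fin.val h
  rw [Fin.val_add, val_one_of_one_lt (by omega), Nat.mod_eq_of_lt (by omega)] at this
  simp at this

theorem oneNearlyIndependent_inter_preimage_one_add (hn : 3 ≤ n) :
    oneNearlyIndependent n ∩ (1 + ·) ⁻¹' oneNearlyIndependent n = {0} := by
  have h1 : ((1 : Fin n) : ℕ) = 1 := val_one_of_one_lt (by omega)
  ext i
  simp only [oneNearlyIndependent, mem_inter_iff, mem_preimage, mem_range, mem_singleton_iff]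
  constructor
  · rintro ⟨⟨a, rfl⟩, ⟨b, hab⟩⟩
    have ha := a.isLt
    have hb := b.isLt
    have hval := congrArg Fin.val hab
    simp only [Fin.val_add, h1] at hval
    rw [Nat.mod_eq_of_lt (by omega)] at hval
    ext
    simp only [Fin.val_zero]
    -- `1 + (2a - 1) = 2b - 1` is impossible for `a ≥ 1` by parity
    omega
  · rintro rfl
    refine ⟨⟨⟨0, by omega⟩, rfl⟩, ⟨1, by omega⟩, ?_⟩
    ext
    simpa using h1.symm

end Fin

open SimpleGraph in
theorem alpha1_cycleGraph (n : ℕ) (hn : 3 ≤ n) :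
    alpha1 (SimpleGraph.cycleGraph n) = (n + 1) / 2 := by
  obtain ⟨m, rfl⟩ : ∃ m, n = m + 1 := ⟨n - 1, by omega⟩
  have h2 := Fin.one_add_one_ne_zero hn
  rw [cycleGraph_eq_circulantGraph]
  refine alpha1_eq ⟨_, Fin.ncard_oneNearlyIndependent _, ?_⟩ fun s hs => by
    simpa using ncard_le_of_ncard_circulantGraph_singleton_inducedEdges_eq_one h2 hs
  rw [ncard_circulantGraph_singleton_inducedEdges h2,
    Fin.oneNearlyIndependent_inter_preimage_one_add hn, ncard_singleton]
end

section
/- For the wheel graph W_n with n ≥ 4 vertices (a cycle on n−1 vertices joined to one central vertex), the 1-nearly vertex independence number equals ⌊n/2⌋. -/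
/-- The join of two graphs: all edges of both, plus all edges between them. -/
def graphJoin {α β : Type*} (G : SimpleGraph α) (H : SimpleGraph β) :
    SimpleGraph (α ⊕ β) where
  Adj x y :=
    match x, y with
    | Sum.inl a, Sum.inl b => G.Adj a b
    | Sum.inr a, Sum.inr b => H.Adj a b
    | _, _ => True
  symm := by constructor; rintro (a | a) (b | b) h <;> first | exact h.symm | trivial
  loopless := by constructor; rintro (a | a) h <;> exact SimpleGraph.irrefl _ h


/-!
A vertex set `s` spanning exactly one edge of the wheel either contains the hub, and then at most
one rim vertex (two would give two spokes), or lies on the rim `C_m`, `m = n - 1`. On the rim,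
`s` and its shift `s - 1` are two sets of size `|s|` among `m` vertices, so at least `2|s| - m`
vertices `i` have `i, i + 1 ∈ s`, each giving its own edge; hence `2|s| ≤ m + 1`. The rim set
`{0, 1, 3, 5, …}` of size `⌈m / 2⌉ = ⌊n / 2⌋` spans only the edge `01`.
-/

open SimpleGraph Set

section InducedEdges

variable {V W : Type*}

lemma sep_edgeSet_forall_mem_eq (G : SimpleGraph V) (s : Set V) :
    {e ∈ G.edgeSet | ∀ v ∈ e, v ∈ s} = G.edgeSet ∩ s.sym2 := by
  ext e
  simp only [mem_sep_iff, mem_inter_iff, mem_sym2_iff_subset]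
  rfl

lemma alpha1_eq_of_forall_ncard_le {G : SimpleGraph V} {N : ℕ}
    (hwit : ∃ s : Set V, s.ncard = N ∧ (G.edgeSet ∩ s.sym2).ncard = 1)
    (hbound : ∀ s : Set V, (G.edgeSet ∩ s.sym2).ncard = 1 → s.ncard ≤ N) :
    alpha1 G = N := by
  simp only [alpha1, sep_edgeSet_forall_mem_eq]
  exact IsGreatest.csSup_eq ⟨hwit, by rintro _ ⟨s, rfl, hs⟩; exact hbound s hs⟩

lemma Set.sym2_mono {s t : Set V} (h : s ⊆ t) : s.sym2 ⊆ t.sym2 :=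
  fun _ hz ↦ mem_sym2_iff_subset.2 ((mem_sym2_iff_subset.1 hz).trans h)

lemma ncard_edgeSet_inter_sym2_image {G : SimpleGraph V} {G' : SimpleGraph W} (f : G ↪g G')
    (s : Set V) : (G'.edgeSet ∩ (f '' s).sym2).ncard = (G.edgeSet ∩ s.sym2).ncard := by
  have : G'.edgeSet ∩ (f '' s).sym2 = Sym2.map f '' (G.edgeSet ∩ s.sym2) := by
    rw [sym2_image]
    ext e
    constructor
    · rintro ⟨he, z, hz, rfl⟩
      exact ⟨z, ⟨(f.map_mem_edgeSet_iff).1 he, hz⟩, rfl⟩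
    · rintro ⟨z, ⟨hz, hs⟩, rfl⟩
      exact ⟨(f.map_mem_edgeSet_iff).2 hz, z, hs, rfl⟩
  rw [this, ncard_image_of_injective _ (Sym2.map.injective f.injective)]

lemma ncard_edgeSet_inter_sym2_preimage_le [Finite W] {G : SimpleGraph V} {G' : SimpleGraph W}
    (f : G ↪g G') (s : Set W) :
    (G.edgeSet ∩ (f ⁻¹' s).sym2).ncard ≤ (G'.edgeSet ∩ s.sym2).ncard := by
  rw [← ncard_edgeSet_inter_sym2_image f]
  exact ncard_le_ncard (inter_subset_inter_right _ (sym2_mono (image_preimage_subset _ _)))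

end InducedEdges

section Join

variable {α β : Type*}

def graphJoin.inlEmbedding (G : SimpleGraph α) (H : SimpleGraph β) : G ↪g graphJoin G H :=
  ⟨Function.Embedding.inl, Iff.rfl⟩

lemma subsingleton_preimage_inl_of_inr_mem {G : SimpleGraph α} {H : SimpleGraph β}
    {s : Set (α ⊕ β)} {b : β} (hb : Sum.inr b ∈ s)
    (hs : ((graphJoin G H).edgeSet ∩ s.sym2).ncard = 1) : (Sum.inl ⁻¹' s).Subsingleton := by
  obtain ⟨e, he⟩ := ncard_eq_one.1 hs
  have hspoke : ∀ a ∈ Sum.inl ⁻¹' s, s(Sum.inr b, Sum.inl a) = e := fun a ha ↦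
    he.subset ⟨trivial, hb, ha⟩
  exact fun a ha a' ha' ↦
    Sum.inl_injective (Sym2.congr_right.1 ((hspoke a ha).trans (hspoke a' ha').symm))

lemma ncard_le_ncard_preimage_inl_add_ncard_preimage_inr (s : Set (α ⊕ β)) :
    s.ncard ≤ (Sum.inl ⁻¹' s).ncard + (Sum.inr ⁻¹' s).ncard := by
  conv_lhs => rw [← image_preimage_inl_union_image_preimage_inr s]
  refine (ncard_union_le _ _).trans_eq ?_
  rw [ncard_image_of_injective _ Sum.inl_injective, ncard_image_of_injective _ Sum.inr_injective]

end Join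

section Cycle

lemma cycleGraph_adj_iff_val {m : ℕ} (hm : 2 ≤ m) {u v : Fin m} :
    (cycleGraph m).Adj u v ↔ u.val = (v.val + 1) % m ∨ v.val = (u.val + 1) % m := by
  obtain ⟨k, rfl⟩ : ∃ k, m = k + 2 := ⟨m - 2, by omega⟩
  rw [cycleGraph_adj, sub_eq_iff_eq_add', sub_eq_iff_eq_add', Fin.ext_iff, Fin.ext_iff,
    Fin.val_add, Fin.val_add, Fin.val_one]

lemma cycleGraph_adj_add_one {m : ℕ} [NeZero m] (hm : 2 ≤ m) (i : Fin m) :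
    (cycleGraph m).Adj i (i + 1) := by
  rw [cycleGraph_adj', add_sub_cancel_left, Fin.val_one', Nat.mod_eq_of_lt hm]
  exact Or.inr rfl

lemma two_mul_ncard_le_add_ncard_cycleGraph_edgeSet_inter_sym2 {m : ℕ} (hm : 3 ≤ m)
    (s : Set (Fin m)) : 2 * s.ncard ≤ m + ((cycleGraph m).edgeSet ∩ s.sym2).ncard := by
  have : NeZero m := ⟨by omega⟩
  set t := (· + 1 : Fin m → Fin m) ⁻¹' s
  have ht : t.ncard = s.ncard :=
    ncard_preimage_of_injective_subset_range (add_left_injective 1)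
      fun x _ ↦ ⟨x - 1, sub_add_cancel x 1⟩
  have hunion : (s ∪ t).ncard ≤ m := (ncard_le_card _).trans (Nat.card_fin m).le
  have hinter : (s ∩ t).ncard ≤ ((cycleGraph m).edgeSet ∩ s.sym2).ncard := by
    refine ncard_le_ncard_of_injOn (fun i ↦ s(i, i + 1))
      (fun i hi ↦ ⟨cycleGraph_adj_add_one (by omega) i, hi⟩) ?_ (toFinite _)
    intro i _ j _ hij
    rcases Sym2.eq_iff.1 hij with ⟨h, -⟩ | ⟨h₁, h₂⟩
    · exact h
    · rw [h₁, add_assoc, add_eq_left, Fin.ext_iff, Fin.val_add, Fin.val_one',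
        Nat.mod_eq_of_lt (by omega : 1 < m), Nat.mod_eq_of_lt (by omega : 1 + 1 < m)] at h₂
      simp at h₂
  have := ncard_union_add_ncard_inter s t
  omega

lemma exists_ncard_eq_cycleGraph_edgeSet_inter_sym2_ncard_eq_one {m : ℕ} (hm : 3 ≤ m) :
    ∃ s : Set (Fin m), s.ncard = (m + 1) / 2 ∧ ((cycleGraph m).edgeSet ∩ s.sym2).ncard = 1 := by
  -- `2 * 0 - 1 = 0` in `ℕ`, so these are `0, 1, 3, 5, …`, all below `m - 1`.
  let f : Fin ((m + 1) / 2) → Fin m := fun j ↦ ⟨2 * j - 1, by omega⟩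
  have hf : f.Injective := fun i j h ↦ by
    simp only [f, Fin.mk.injEq] at h
    omega
  refine ⟨range f, by rw [ncard_range_of_injective hf, Nat.card_fin], ?_⟩
  suffices (cycleGraph m).edgeSet ∩ (range f).sym2 = {s(f ⟨0, by omega⟩, f ⟨1, by omega⟩)} by
    rw [this, ncard_singleton]
  refine eq_singleton_iff_unique_mem.2 ⟨⟨?_, mem_range_self _, mem_range_self _⟩, ?_⟩
  · simp only [mem_edgeSet, cycleGraph_adj_iff_val (by omega : 2 ≤ m), f]
    exact Or.inr (Nat.mod_eq_of_lt (by omega)).symm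
  rintro e ⟨hadj, he⟩
  induction e using Sym2.ind with | _ u v => ?_
  obtain ⟨⟨i, rfl⟩, ⟨j, rfl⟩⟩ := he
  simp only [mem_edgeSet, cycleGraph_adj_iff_val (by omega : 2 ≤ m), f] at hadj
  rw [Nat.mod_eq_of_lt (by omega), Nat.mod_eq_of_lt (by omega)] at hadj
  simp only [f, Sym2.eq_iff, Fin.ext_iff]
  omega

end Cycle

section Wheel

-- The paper's `W_{m + 1}`: the hub `Sum.inr 0` joined to the cycle on `m` vertices.
abbrev wheelGraph (m : ℕ) : SimpleGraph (Fin m ⊕ Fin 1) := graphJoin (cycleGraph m) ⊤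

variable {m : ℕ}

lemma ncard_le_of_wheelGraph_edgeSet_inter_sym2_ncard_eq_one (hm : 3 ≤ m)
    {s : Set (Fin m ⊕ Fin 1)} (hs : ((wheelGraph m).edgeSet ∩ s.sym2).ncard = 1) :
    s.ncard ≤ (m + 1) / 2 := by
  have hsplit := ncard_le_ncard_preimage_inl_add_ncard_preimage_inr s
  by_cases hhub : Sum.inr 0 ∈ s
  · have hcyc : (Sum.inl ⁻¹' s).ncard ≤ 1 :=
      ncard_le_one_iff_subsingleton.2 (subsingleton_preimage_inl_of_inr_mem hhub hs)
    have hhubs : (Sum.inr ⁻¹' s).ncard ≤ 1 := ncard_le_one_of_subsingleton _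
    omega
  · have hhubs : Sum.inr ⁻¹' s = ∅ := by
      ext b
      simpa [Subsingleton.elim b 0] using hhub
    have hedges : ((cycleGraph m).edgeSet ∩ (Sum.inl ⁻¹' s).sym2).ncard ≤
        ((wheelGraph m).edgeSet ∩ s.sym2).ncard :=
      ncard_edgeSet_inter_sym2_preimage_le (graphJoin.inlEmbedding _ _) s
    have hcyc := two_mul_ncard_le_add_ncard_cycleGraph_edgeSet_inter_sym2 hm (Sum.inl ⁻¹' s)
    rw [hhubs, ncard_empty] at hsplit
    omega

lemma exists_ncard_eq_wheelGraph_edgeSet_inter_sym2_ncard_eq_one (hm : 3 ≤ m) :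
    ∃ s : Set (Fin m ⊕ Fin 1), s.ncard = (m + 1) / 2 ∧
      ((wheelGraph m).edgeSet ∩ s.sym2).ncard = 1 := by
  obtain ⟨s, hs, hedges⟩ := exists_ncard_eq_cycleGraph_edgeSet_inter_sym2_ncard_eq_one hm
  let f := graphJoin.inlEmbedding (cycleGraph m) (⊤ : SimpleGraph (Fin 1))
  exact ⟨f '' s, by rwa [ncard_image_of_injective _ f.injective],
    by rwa [ncard_edgeSet_inter_sym2_image f]⟩

end Wheel

theorem alpha1_wheelGraph (n : ℕ) (hn : 4 ≤ n) :
    alpha1 (graphJoin (SimpleGraph.cycleGraph (n - 1)) (⊤ : SimpleGraph (Fin 1))) = n / 2 := by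
  obtain ⟨m, rfl⟩ : ∃ m, n = m + 1 := ⟨n - 1, by omega⟩
  have hm : 3 ≤ m := by omega
  rw [Nat.add_sub_cancel]
  exact alpha1_eq_of_forall_ncard_le (exists_ncard_eq_wheelGraph_edgeSet_inter_sym2_ncard_eq_one hm)
    fun _ ↦ ncard_le_of_wheelGraph_edgeSet_inter_sym2_ncard_eq_one hm
end

section
/- If G is a connected graph of order n ≥ 2, then α₁(G) ≥ 2, with equality if and only if G is a good graph, i.e., for every edge uv of G, N[u] ∪ N[v] = V(G). -/
/-- A graph is good if for every edge uv, N[u] ∪ N[v] = V(G). -/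
def IsGood {V : Type*} (G : SimpleGraph V) : Prop :=
  ∀ ⦃u v : V⦄, G.Adj u v → ∀ w : V, w = u ∨ w = v ∨ G.Adj u w ∨ G.Adj v w

/-!
The two endpoints of an edge induce exactly one edge, and a connected graph on at least two
vertices has an edge, so `2 ≤ alpha1 G`. If a vertex `w` lies outside `N[u] ∪ N[v]` for an edge
`uv`, then `{u, v, w}` still induces only `uv`, so `alpha1 G = 2` forces every edge to be good.
Conversely, if `s` induces only the edge `uv` and `uv` is good, any further vertex of `s` would
induce a second edge with `u` or `v`, so `s ⊆ {u, v}`.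
-/

namespace SimpleGraph

variable {V : Type*} {G : SimpleGraph V} {s : Set V} {u v w : V}

def inducedEdgeSet (G : SimpleGraph V) (s : Set V) : Set (Sym2 V) :=
  {e ∈ G.edgeSet | ∀ v ∈ e, v ∈ s}

@[simp]
lemma mk_mem_inducedEdgeSet : s(u, v) ∈ G.inducedEdgeSet s ↔ G.Adj u v ∧ u ∈ s ∧ v ∈ s := by
  simp [inducedEdgeSet]

lemma inducedEdgeSet_pair (h : G.Adj u v) : G.inducedEdgeSet {u, v} = {s(u, v)} := by
  ext e
  induction e using Sym2.ind with
  | _ a b =>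
    simp only [mk_mem_inducedEdgeSet, Set.mem_insert_iff, Set.mem_singleton_iff, Sym2.eq_iff]
    constructor
    · rintro ⟨hab, rfl | rfl, rfl | rfl⟩ <;> simp_all
    · rintro (⟨rfl, rfl⟩ | ⟨rfl, rfl⟩) <;> simp [h, h.symm]

lemma inducedEdgeSet_insert_of_forall_not_adj (hw : ∀ x ∈ s, ¬G.Adj w x) :
    G.inducedEdgeSet (insert w s) = G.inducedEdgeSet s := by
  ext e
  induction e using Sym2.ind with
  | _ a b =>
    simp only [mk_mem_inducedEdgeSet, Set.mem_insert_iff]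
    constructor
    · rintro ⟨hab, rfl | ha, rfl | hb⟩
      · exact absurd hab (G.loopless.irrefl _)
      · exact absurd hab (hw b hb)
      · exact absurd hab.symm (hw a ha)
      · exact ⟨hab, ha, hb⟩
    · rintro ⟨hab, ha, hb⟩
      exact ⟨hab, Or.inr ha, Or.inr hb⟩

lemma subset_pair_of_inducedEdgeSet_eq_singleton (hG : IsGood G)
    (hs : G.inducedEdgeSet s = {s(u, v)}) : s ⊆ {u, v} := by
  obtain ⟨huv, hu, hv⟩ : G.Adj u v ∧ u ∈ s ∧ v ∈ s := by simp [← mk_mem_inducedEdgeSet, hs]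
  intro w hw
  have mem_pair_of_adj : ∀ x ∈ s, G.Adj x w → w ∈ ({u, v} : Set V) := fun x hx hxw => by
    have hxw : s(x, w) = s(u, v) := by simpa [hs] using mk_mem_inducedEdgeSet.2 ⟨hxw, hx, hw⟩
    simpa [hxw] using Sym2.mem_mk_right x w
  rcases hG huv w with rfl | rfl | huw | hvw
  · simp
  · simp
  · exact mem_pair_of_adj u hu huw
  · exact mem_pair_of_adj v hv hvw

end SimpleGraph

section Alpha1

open SimpleGraph

variable {V : Type*} {G : SimpleGraph V} {s : Set V} {u v : V}

lemma le_alpha1 [Finite V] (hs : (G.inducedEdgeSet s).ncard = 1) : s.ncard ≤ alpha1 G :=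
  le_csSup ⟨Nat.card V, by rintro _ ⟨t, rfl, -⟩; exact Set.ncard_le_card t⟩ ⟨s, rfl, hs⟩

lemma alpha1_le {k : ℕ} (h : ∀ s : Set V, (G.inducedEdgeSet s).ncard = 1 → s.ncard ≤ k) :
    alpha1 G ≤ k :=
  csSup_le' <| by rintro _ ⟨s, rfl, hs⟩; exact h s hs

lemma two_le_alpha1 [Finite V] (h : G.Adj u v) : 2 ≤ alpha1 G := by
  calc 2 = ({u, v} : Set V).ncard := (Set.ncard_pair h.ne).symm
    _ ≤ alpha1 G := le_alpha1 (by rw [inducedEdgeSet_pair h, Set.ncard_singleton])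

lemma IsGood.alpha1_le_two (hG : IsGood G) : alpha1 G ≤ 2 := by
  refine alpha1_le fun s hs => ?_
  obtain ⟨e, he⟩ := Set.ncard_eq_one.1 hs
  induction e using Sym2.ind with
  | _ u v =>
    calc s.ncard ≤ ({u, v} : Set V).ncard :=
          Set.ncard_le_ncard (subset_pair_of_inducedEdgeSet_eq_singleton hG he)
      _ ≤ 2 := (Set.ncard_insert_le u {v}).trans_eq (by simp)

lemma isGood_of_alpha1_le_two [Finite V] (h : alpha1 G ≤ 2) : IsGood G := by
  intro u v huv w
  by_contra! hw
  obtain ⟨hwu, hwv, huw, hvw⟩ := hw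
  have hnadj : ∀ x ∈ ({u, v} : Set V), ¬G.Adj w x := by
    rintro x (rfl | rfl)
    exacts [fun h => huw h.symm, fun h => hvw h.symm]
  have hone : (G.inducedEdgeSet {w, u, v}).ncard = 1 := by
    rw [inducedEdgeSet_insert_of_forall_not_adj hnadj, inducedEdgeSet_pair huv,
      Set.ncard_singleton]
  have hcard : ({w, u, v} : Set V).ncard = 3 :=
    Set.ncard_eq_three.2 ⟨w, u, v, hwu, hwv, huv.ne, rfl⟩
  have := le_alpha1 hone
  omega

lemma isGood_iff_alpha1_le_two [Finite V] : IsGood G ↔ alpha1 G ≤ 2 :=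
  ⟨IsGood.alpha1_le_two, isGood_of_alpha1_le_two⟩

end Alpha1

theorem alpha1_connected_lower_bound {V : Type*} [Fintype V] (G : SimpleGraph V)
    (hn : 2 ≤ Fintype.card V) (hc : G.Connected) :
    2 ≤ alpha1 G ∧ (alpha1 G = 2 ↔ IsGood G) := by
  have : Nontrivial V := Fintype.one_lt_card_iff_nontrivial.1 hn
  obtain ⟨v, hv⟩ := hc.preconnected.exists_adj_of_nontrivial (Classical.arbitrary V)
  have h2 := two_le_alpha1 hv
  refine ⟨h2, ?_⟩
  rw [isGood_iff_alpha1_le_two]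
  omega
end

section
/- For n ≥ 3, the broom graph B³_n (a path on 3 vertices with n−3 extra leaves attached to one endpoint of the path) satisfies α₁(B³_n) = n − 1. -/
/-- The graph obtained from the star K_{1,n-1} (center 0) by adding the edge
between the leaves 1 and 2. -/
def unicyclicStar (n : ℕ) : SimpleGraph (Fin n) where
  Adj i j := i ≠ j ∧ (i.val = 0 ∨ j.val = 0 ∨
    ((i.val = 1 ∨ i.val = 2) ∧ (j.val = 1 ∨ j.val = 2)))
  symm := ⟨by rintro i j ⟨h1, h2⟩; exact ⟨h1.symm, by tauto⟩⟩
  loopless := ⟨by rintro i ⟨h1, _⟩; exact h1 rfl⟩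

/-- The broom B³ₙ: the path 0-1-2 together with n-3 pendant leaves attached to
the end-vertex 0. -/
def broom3 (n : ℕ) : SimpleGraph (Fin n) where
  Adj i j := i ≠ j ∧ ((i.val = 0 ∧ j.val = 1) ∨ (i.val = 1 ∧ j.val = 0) ∨
    (i.val = 1 ∧ j.val = 2) ∨ (i.val = 2 ∧ j.val = 1) ∨
    (i.val = 0 ∧ 3 ≤ j.val) ∨ (j.val = 0 ∧ 3 ≤ i.val))
  symm := ⟨by rintro i j ⟨h1, h2⟩; exact ⟨h1.symm, by tauto⟩⟩
  loopless := ⟨by rintro i ⟨h1, _⟩; exact h1 rfl⟩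

/-!
Vertex 1 lies on the two edges `01` and `12`, so the whole vertex set induces more than one
edge and `α₁(B³ₙ) ≤ n - 1`. Every edge other than `12` is incident to the vertex `0`, so
deleting `0` leaves a set of `n - 1` vertices inducing exactly one edge.
-/

namespace SimpleGraph

variable {V : Type*} (G : SimpleGraph V)

lemma setOf_edge_forall_mem_compl_singleton (v : V) :
    {e ∈ G.edgeSet | ∀ w ∈ e, w ∈ ({v}ᶜ : Set V)} = {e ∈ G.edgeSet | v ∉ e} := by
  ext e
  simp only [Set.mem_ofPred_eq, Set.mem_compl_singleton_iff]
  exact and_congr_right fun _ => ⟨fun h hv => h v hv rfl, fun h w hw hwv => h (hwv ▸ hw)⟩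

lemma le_alpha1 [Finite V] {s : Set V} (hs : {e ∈ G.edgeSet | ∀ v ∈ e, v ∈ s}.ncard = 1) :
    s.ncard ≤ alpha1 G :=
  le_csSup ⟨Nat.card V, by rintro _ ⟨t, rfl, -⟩; exact Set.ncard_le_card t⟩ ⟨s, rfl, hs⟩

lemma card_sub_one_le_alpha1 [Finite V] (v : V) (h : {e ∈ G.edgeSet | v ∉ e}.ncard = 1) :
    Nat.card V - 1 ≤ alpha1 G := by
  have := G.le_alpha1 (s := {v}ᶜ) (by rwa [setOf_edge_forall_mem_compl_singleton])
  rwa [Set.ncard_compl, Set.ncard_singleton] at this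

lemma alpha1_le_card_sub_one [Finite V] (h : G.edgeSet.ncard ≠ 1) :
    alpha1 G ≤ Nat.card V - 1 := by
  refine csSup_le' ?_
  rintro _ ⟨s, rfl, hs⟩
  have hlt : s.ncard < Nat.card V := by
    refine (Set.ncard_le_card s).lt_of_ne fun hcard => h ?_
    have hs_univ : s = Set.univ :=
      Set.eq_of_subset_of_ncard_le (Set.subset_univ s) (by rw [Set.ncard_univ, hcard])
    simpa [hs_univ] using hs
  omega

end SimpleGraph

lemma broom3_setOf_edge_not_mem_zero {n : ℕ} (hn : 3 ≤ n) :
    {e ∈ (broom3 n).edgeSet | (⟨0, by omega⟩ : Fin n) ∉ e} =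
      {s(⟨1, by omega⟩, ⟨2, by omega⟩)} := by
  ext e
  induction e using Sym2.ind with
  | _ a b =>
    simp only [Set.mem_ofPred_eq, SimpleGraph.mem_edgeSet, Set.mem_singleton_iff, Sym2.mem_iff,
      Sym2.eq_iff, broom3, Fin.ext_iff]
    omega

lemma broom3_one_lt_ncard_edgeSet {n : ℕ} (hn : 3 ≤ n) : 1 < (broom3 n).edgeSet.ncard :=
  (Set.one_lt_ncard_iff (Set.toFinite _)).mpr
    ⟨s(⟨0, by omega⟩, ⟨1, by omega⟩), s(⟨1, by omega⟩, ⟨2, by omega⟩),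
      by simp [broom3], by simp [broom3], by simp⟩

theorem alpha1_broom3 (n : ℕ) (hn : 3 ≤ n) :
    alpha1 (broom3 n) = n - 1 := by
  have hupper := (broom3 n).alpha1_le_card_sub_one (broom3_one_lt_ncard_edgeSet hn).ne'
  have hlower := (broom3 n).card_sub_one_le_alpha1 _
    (by rw [broom3_setOf_edge_not_mem_zero hn, Set.ncard_singleton])
  rw [Nat.card_fin] at hupper hlower
  exact le_antisymm hupper hlower
end

section
/- If G is a connected graph of order n ≥ 3 containing a cycle and α₁(G) = n − 1, then every cycle of G is a triangle. -/
namespace SimpleGraph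

variable {V : Type*} {G : SimpleGraph V}

theorem exists_ncard_eq_alpha1 [Finite V] (h : alpha1 G ≠ 0) :
    ∃ s : Set V, s.ncard = alpha1 G ∧ {e ∈ G.edgeSet | ∀ v ∈ e, v ∈ s}.ncard = 1 := by
  refine (Nat.sSup_mem (Set.nonempty_iff_ne_empty.mpr fun hemp => h ?_) ⟨Nat.card V, ?_⟩ :
    alpha1 G ∈ _)
  · rw [alpha1, hemp, csSup_empty]
    rfl
  · rintro k ⟨s, rfl, -⟩
    exact Set.ncard_le_card s

namespace Walk

variable [DecidableEq V]

theorem countP_mem_edges_le (v : V) {a b : V} (p : G.Walk a b) :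
    p.edges.countP (v ∈ ·) ≤ p.support.dropLast.count v + p.support.tail.count v := by
  induction p with
  | nil => simp
  | @cons a c b _ q ih =>
    have hq : q.support.count v = q.support.tail.count v + if c = v then 1 else 0 := by
      conv_lhs => rw [← q.cons_tail_support, List.count_cons]
      simp only [beq_iff_eq]
    rw [edges_cons, support_cons, List.dropLast_cons_of_ne_nil q.support_ne_nil, List.tail_cons,
      List.countP_cons, List.count_cons, hq]
    simp only [Sym2.mem_iff, decide_eq_true_eq, beq_iff_eq, @eq_comm _ v]
    have hac : (if a = v ∨ c = v then 1 else 0) ≤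
        (if a = v then 1 else 0) + (if c = v then 1 else 0) := by
      by_cases a = v <;> by_cases c = v <;> simp [*]
    omega

theorem IsCycle.countP_mem_edges_le_two {u : V} {c : G.Walk u u} (hc : c.IsCycle) (v : V) :
    c.edges.countP (v ∈ ·) ≤ 2 := by
  have h₁ := List.nodup_iff_count_le_one.mp hc.nodup_dropLast_support v
  have h₂ := List.nodup_iff_count_le_one.mp hc.support_nodup v
  have := c.countP_mem_edges_le v
  omega

theorem IsCycle.length_le_three_of_forall_mem_edgeSet {u : V} {c : G.Walk u u} (hc : c.IsCycle)
    {v : V} {e₀ : Sym2 V} (h : ∀ e ∈ G.edgeSet, e = e₀ ∨ v ∈ e) : c.length ≤ 3 := by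
  have h₀ : c.edges.count e₀ ≤ 1 := List.nodup_iff_count_le_one.mp hc.edges_nodup e₀
  have hv : c.edges.countP (fun e => ¬ e == e₀) ≤ c.edges.countP (v ∈ ·) :=
    List.countP_mono_left fun e he hne => by
      simpa using (h e (c.edges_subset_edgeSet he)).resolve_left (by simpa using hne)
  calc c.length = c.edges.length := c.length_edges.symm
    _ = c.edges.count e₀ + c.edges.countP (fun e => ¬ e == e₀) :=
        List.length_eq_countP_add_countP _
    _ ≤ 1 + 2 := by grw [h₀, hv, hc.countP_mem_edges_le_two]

omit [DecidableEq V] in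
theorem IsCycle.length_le_card [Fintype V] {u : V} {c : G.Walk u u} (hc : c.IsCycle) :
    c.length ≤ Fintype.card V := by
  simpa using hc.support_nodup.length_le_card

end Walk

theorem forall_mem_edgeSet_eq_or_mem {s : Set V} {v : V} {e₀ : Sym2 V} (hv : sᶜ = {v})
    (he₀ : {e ∈ G.edgeSet | ∀ w ∈ e, w ∈ s} = {e₀}) : ∀ e ∈ G.edgeSet, e = e₀ ∨ v ∈ e := by
  intro e he
  by_cases hve : v ∈ e
  · exact Or.inr hve
  · refine Or.inl (he₀ ▸ ⟨he, fun w hw => ?_⟩ : e ∈ ({e₀} : Set (Sym2 V)))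
    by_contra hws
    rw [← Set.mem_compl_iff, hv, Set.mem_singleton_iff] at hws
    exact hve (hws ▸ hw)

end SimpleGraph

theorem cycles_are_triangles_general (n : ℕ) (G : SimpleGraph (Fin n))
    (ha : alpha1 G = n - 1) :
    ∀ (u : Fin n) (c : G.Walk u u), c.IsCycle → c.length = 3 := by
  classical
  intro u c hc
  have hn : 3 ≤ n := by simpa using hc.three_le_length.trans hc.length_le_card
  obtain ⟨s, hs, he⟩ := SimpleGraph.exists_ncard_eq_alpha1 (G := G) (by omega)
  obtain ⟨v, hv⟩ : ∃ v, sᶜ = {v} := by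
    rw [← Set.ncard_eq_one]
    have := Set.ncard_add_ncard_compl s
    simp only [Nat.card_eq_fintype_card, Fintype.card_fin] at this
    omega
  obtain ⟨e₀, he₀⟩ := Set.ncard_eq_one.mp he
  exact le_antisymm
    (hc.length_le_three_of_forall_mem_edgeSet (SimpleGraph.forall_mem_edgeSet_eq_or_mem hv he₀))
    hc.three_le_length

theorem cycles_are_triangles (n : ℕ) (hn : 3 ≤ n) (G : SimpleGraph (Fin n))
    (hc : G.Connected) (hcyc : ∃ (u : Fin n) (c : G.Walk u u), c.IsCycle)
    (ha : alpha1 G = n - 1) :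
    ∀ (u : Fin n) (c : G.Walk u u), c.IsCycle → c.length = 3 :=
  cycles_are_triangles_general n G ha
end
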